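/- Weak deducibility of identicals for the immediate grounding operator ▶: for all lists Γ, Δ of formulas and every formula B such that R Γ Δ B holds and Γ ++ Δ is nonempty, there exists a derivation of cl Γ Δ B from the hypothesis set {cl Γ Δ B} whose last inference is the ▶-introduction rule and each of whose immediate subderivations consists of a single ▶-elimination applied to the hypothesis cl Γ Δ B; in particular this derivation applies a ▶-elimination rule at least once. -/

import Mathlib

variable {α : Type*}

/-- The language extended by immediate grounding claims: `Sum.inl a` is the plain
formula `a` (written `fm a`) and `Sum.inr (Γ, Δ, B)` is the immediate grounding claim
`Γ[Δ]▶B` (written `cl Γ Δ B`). -/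
abbrev EForm (α : Type*) := α ⊕ (List α × List α × α)

/-- Derivations from a set `H` of hypotheses in the calculus consisting of the
hypothesis rule, the ▶-introduction rule and the ▶-elimination rules. -/
inductive Der {α : Type*} (R : List α → List α → α → Prop) (H : Set (EForm α)) :
    EForm α → Type _ where
  | hyp {e : EForm α} : e ∈ H → Der R H e
  | introB {Γ Δ : List α} {B : α} :
      R Γ Δ B → (∀ a ∈ Γ ++ Δ, Der R H (Sum.inl a)) → Der R H (Sum.inr (Γ, Δ, B))
  | elimC {Γ Δ : List α} {B : α} :
      Der R H (Sum.inr (Γ, Δ, B)) → Der R H (Sum.inl B)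
  | elimG {Γ Δ : List α} {B a : α} :
      Der R H (Sum.inr (Γ, Δ, B)) → a ∈ Γ → Der R H (Sum.inl a)
  | elimD {Γ Δ : List α} {B c : α} :
      Der R H (Sum.inr (Γ, Δ, B)) → c ∈ Δ → Der R H (Sum.inl c)

/-- `d` consists of a single ▶-elimination applied to a hypothesis. -/
def IsElimOfHyp {R : List α → List α → α → Prop} {H : Set (EForm α)} {a : α}
    (d : Der R H (Sum.inl a)) : Prop :=
  (∃ (Γ Δ : List α) (hm : Sum.inr (Γ, Δ, a) ∈ H),
      d = Der.elimC (Der.hyp hm)) ∨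
  (∃ (Γ Δ : List α) (B : α) (hm : Sum.inr (Γ, Δ, B) ∈ H) (ha : a ∈ Γ),
      d = Der.elimG (Der.hyp hm) ha) ∨
  (∃ (Γ Δ : List α) (B : α) (hm : Sum.inr (Γ, Δ, B) ∈ H) (ha : a ∈ Δ),
      d = Der.elimD (Der.hyp hm) ha)

/-! Each formula `a ∈ Γ ++ Δ` is obtained from the hypothesis `Γ[Δ]▶B` by one ▶-elimination
(for grounds if `a ∈ Γ`, for conditions otherwise); ▶-introduction then reassembles `Γ[Δ]▶B`,
and since `Γ ++ Δ` is nonempty at least one elimination actually occurs. -/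

namespace Der

variable {R : List α → List α → α → Prop} {H : Set (EForm α)} {Γ Δ : List α} {B : α}

open Classical in
noncomputable def elimOfMemAppend (hm : Sum.inr (Γ, Δ, B) ∈ H) {a : α} (ha : a ∈ Γ ++ Δ) :
    Der R H (Sum.inl a) :=
  if hg : a ∈ Γ then elimG (hyp hm) hg
  else elimD (hyp hm) ((List.mem_append.1 ha).resolve_left hg)

theorem isElimOfHyp_elimOfMemAppend (hm : Sum.inr (Γ, Δ, B) ∈ H) {a : α} (ha : a ∈ Γ ++ Δ) :
    IsElimOfHyp (elimOfMemAppend (R := R) hm ha) := by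
  unfold elimOfMemAppend
  split_ifs with hg
  · exact Or.inr (Or.inl ⟨Γ, Δ, B, hm, hg, rfl⟩)
  · exact Or.inr (Or.inr ⟨Γ, Δ, B, hm, _, rfl⟩)

end Der

theorem weak_deducibility_of_identicals_immediate {α : Type*}
    (R : List α → List α → α → Prop) (Γ Δ : List α) (B : α)
    (hR : R Γ Δ B) (hne : Γ ++ Δ ≠ []) :
    ∃ (d : Der R {Sum.inr (Γ, Δ, B)} (Sum.inr (Γ, Δ, B)))
      (f : ∀ a ∈ Γ ++ Δ, Der R {Sum.inr (Γ, Δ, B)} (Sum.inl a)),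
      d = Der.introB hR f ∧
      (∀ (a : α) (h : a ∈ Γ ++ Δ), IsElimOfHyp (f a h)) ∧
      (∃ (a : α) (h : a ∈ Γ ++ Δ), IsElimOfHyp (f a h)) := by
  have hm : Sum.inr (Γ, Δ, B) ∈ ({Sum.inr (Γ, Δ, B)} : Set (EForm α)) := rfl
  have hf := fun a (ha : a ∈ Γ ++ Δ) => Der.isElimOfHyp_elimOfMemAppend (R := R) hm ha
  obtain ⟨a, ha⟩ := List.exists_mem_of_ne_nil _ hne
  exact ⟨_, fun a ha => Der.elimOfMemAppend hm ha, rfl, hf, a, ha, hf a ha⟩
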